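/- Consider the associative operation ⋆ on I × J defined by (a,b) ⋆ (c,d) = (a,d), and its canonical extension to ultrafilters on I × J given by X ∈ V ⊛ W iff {(a,b) : {(c,d) : (a,d) ∈ X} ∈ W} ∈ V. Then for all ultrafilters V, W on I × J, V ⊛ W = π₁(V) ⊗ π₂(W). Consequently, an ultrafilter V on I × J is a tensor product if and only if V ⊛ V = V. -/

import Mathlib

/-- Tensor product of ultrafilters: `X ∈ tensor U V ↔ {i | {j | (i,j) ∈ X} ∈ V} ∈ U`. -/
def tensor {I J : Type*} (U : Ultrafilter I) (V : Ultrafilter J) : Ultrafilter (I × J) :=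
  U.bind fun i => V.map fun j => (i, j)

theorem mem_tensor {I J : Type*} {U : Ultrafilter I} {V : Ultrafilter J} {X : Set (I × J)} :
    X ∈ tensor U V ↔ {i : I | {j : J | (i, j) ∈ X} ∈ V} ∈ U := Iff.rfl

/-- The canonical extension to ultrafilters of the operation (a,b) ⋆ (c,d) = (a,d):
X ∈ starOp V W ↔ {p | {q | (p.1, q.2) ∈ X} ∈ W} ∈ V. -/
def starOp {I J : Type*} (V W : Ultrafilter (I × J)) : Ultrafilter (I × J) :=
  V.bind fun p => W.map fun q => (p.1, q.2)

/-! Since `(a,b) ⋆ (c,d)` depends only on `a` and `d`, the iterated limit defining `V ⊛ W` only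
sees the marginals `π₁(V)` and `π₂(W)`, which makes `V ⊛ W = π₁(V) ⊗ π₂(W)` hold by unfolding.
A tensor product `U ⊗ U'` has marginals `U` and `U'`, so it is idempotent; conversely an
idempotent `V` equals `π₁(V) ⊗ π₂(V)`. -/

section

variable {I J : Type*}

theorem starOp_eq_tensor (V W : Ultrafilter (I × J)) :
    starOp V W = tensor (Ultrafilter.map Prod.fst V) (Ultrafilter.map Prod.snd W) :=
  rfl

@[simp]
theorem map_fst_tensor (U : Ultrafilter I) (U' : Ultrafilter J) :
    Ultrafilter.map Prod.fst (tensor U U') = U := by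
  ext X
  change (∀ᶠ i in (U : Filter I), ∀ᶠ _ in (U' : Filter J), i ∈ X) ↔ X ∈ U
  simp only [Filter.eventually_const]
  rfl

@[simp]
theorem map_snd_tensor (U : Ultrafilter I) (U' : Ultrafilter J) :
    Ultrafilter.map Prod.snd (tensor U U') = U' := by
  ext X
  exact Filter.eventually_const (f := (U : Filter I)) (p := X ∈ U')

end

theorem stmt_18 {I J : Type*} :
    (∀ V W : Ultrafilter (I × J),
      starOp V W = tensor (Ultrafilter.map Prod.fst V) (Ultrafilter.map Prod.snd W)) ∧
    (∀ V : Ultrafilter (I × J),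
      (∃ (U : Ultrafilter I) (U' : Ultrafilter J), V = tensor U U') ↔ starOp V V = V) := by
  refine ⟨starOp_eq_tensor, fun V => ⟨?_, fun h => ⟨_, _, h.symm.trans (starOp_eq_tensor V V)⟩⟩⟩
  rintro ⟨U, U', rfl⟩
  rw [starOp_eq_tensor, map_fst_tensor, map_snd_tensor]
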